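/- arXiv:math/0005067 — 3 statements merged into one kernel-verified Lean document; each statement's English description precedes it below -/
import Mathlib

section
/- Let (Ω,T) be a minimal subshift over a finite alphabet A with associated set of words W. Then the following are equivalent: (i) (Ω,T) satisfies (SET), i.e. for every subadditive function F: W → ℝ the limit lim_{|w|→∞} F(w)/|w| exists and equals inf_{n≥1} F^{(n)}; (ii) (Ω,T) satisfies (PQ), i.e. there is a constant C > 0 with ν(v) ≥ C for every nonempty v ∈ W. -/
open Filter Topology

namespace SubshiftErgodic

variable {A : Type*}

/-- The shift map `T` on two-sided sequences over `A`: `(T ω) n = ω (n+1)`. -/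
def shift (ω : ℤ → A) : ℤ → A := fun n => ω (n + 1)

/-- The `n`-th power of the shift: `(shiftZ n ω) k = ω (k + n)`. -/
def shiftZ (n : ℤ) (ω : ℤ → A) : ℤ → A := fun k => ω (k + n)

/-- `Ω` is a subshift: a closed, shift-invariant subset of `A^ℤ`. -/
def IsSubshift [TopologicalSpace A] (Ω : Set (ℤ → A)) : Prop :=
  IsClosed Ω ∧ shift '' Ω = Ω

/-- Minimality: every orbit `{T^n ω : n ∈ ℤ}` is dense in `Ω`. -/
def IsMinimal [TopologicalSpace A] (Ω : Set (ℤ → A)) : Prop :=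
  ∀ ω ∈ Ω, Ω ⊆ closure {ρ | ∃ n : ℤ, ρ = shiftZ n ω}

/-- The finite word `w` occurs in the sequence `ω` at position `k`. -/
def OccursAt (w : List A) (ω : ℤ → A) (k : ℤ) : Prop :=
  ∀ i : Fin w.length, ω (k + (i : ℕ)) = w.get i

/-- The set `W = W(Ω)` of finite words occurring as factors of elements of `Ω`. -/
def words (Ω : Set (ℤ → A)) : Set (List A) :=
  {w | ∃ ω ∈ Ω, ∃ k : ℤ, OccursAt w ω k}

/-- `v` occurs as a factor of the finite word `w` at position `i`. -/
def OccursIn (v w : List A) (i : ℕ) : Prop :=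
  i + v.length ≤ w.length ∧ v <+: w.drop i

/-- `♯_v(w)`: the number of occurrences of `v` as a factor of `w`. -/
noncomputable def occ (v w : List A) : ℕ :=
  {i : ℕ | OccursIn v w i}.ncard

/-- `z` is a return word of `u` (relative to the set of words `W`). -/
def IsReturnWord (W : Set (List A)) (z u : List A) : Prop :=
  z ∈ W ∧ z ++ u ∈ W ∧ occ u (z ++ u) = 2 ∧ u <+: z ++ u

/-- The maximal number of pairwise disjoint occurrences of `v` as a factor of `w`. -/
noncomputable def maxDisjoint (v w : List A) : ℕ :=
  sSup {m : ℕ | ∃ s : Fin m → ℕ, (∀ i, OccursIn v w (s i)) ∧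
    ∀ i j : Fin m, i < j → s i + v.length ≤ s j}

/-- The filter expressing `|w| → ∞` along words `w ∈ W`. -/
def wordsFilter (W : Set (List A)) : Filter (List A) :=
  ⨅ L : ℕ, Filter.principal {w | w ∈ W ∧ L ≤ w.length}

/-- `lim_{|w| → ∞} g w = x` over `w ∈ W`: for every `ε > 0` there is `L` with
`‖g w - x‖ ≤ ε` for all `w ∈ W` with `|w| ≥ L`. -/
def TendstoWords {B : Type*} [SeminormedAddCommGroup B] (W : Set (List A))
    (g : List A → B) (x : B) : Prop :=
  ∀ ε : ℝ, 0 < ε → ∃ L : ℕ, ∀ w ∈ W, L ≤ w.length → ‖g w - x‖ ≤ ε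

/-- `liminf_{|w| → ∞} g w` over `w ∈ W`, valued in the extended reals. -/
noncomputable def liminfWords (W : Set (List A)) (g : List A → ℝ) : EReal :=
  Filter.liminf (fun w => (g w : EReal)) (wordsFilter W)

/-- `limsup_{|w| → ∞} g w` over `w ∈ W`, valued in the extended reals. -/
noncomputable def limsupWords (W : Set (List A)) (g : List A → ℝ) : EReal :=
  Filter.limsup (fun w => (g w : EReal)) (wordsFilter W)

/-- `ν(v) = liminf_{|w| → ∞} l_v(w)/|w|`, where
`l_v(w) = (max number of pairwise disjoint copies of v in w) ⬝ |v|`. -/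
noncomputable def nu (W : Set (List A)) (v : List A) : EReal :=
  liminfWords W (fun w => ((maxDisjoint v w * v.length : ℕ) : ℝ) / (w.length : ℝ))

/-- Condition (PQ): uniform positivity of quasiweights. -/
def PQ (W : Set (List A)) : Prop :=
  ∃ C : ℝ, 0 < C ∧ ∀ v ∈ W, v ≠ [] → (C : EReal) ≤ nu W v

/-- Unique ergodicity: all word frequencies `♯_v(w)/|w|` converge as `|w| → ∞`. -/
def UniquelyErgodic (Ω : Set (ℤ → A)) : Prop :=
  ∀ v ∈ words Ω, ∃ x : ℝ,
    TendstoWords (words Ω) (fun w => (occ v w : ℝ) / (w.length : ℝ)) x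

/-- `F : W → ℝ` is subadditive. -/
def IsSubadditive (W : Set (List A)) (F : List A → ℝ) : Prop :=
  ∀ a b : List A, a ∈ W → b ∈ W → a ++ b ∈ W → F (a ++ b) ≤ F a + F b

/-- `F^(n) = max { F v / |v| : v ∈ W, |v| = n }`. -/
noncomputable def wordSup (W : Set (List A)) (F : List A → ℝ) (n : ℕ) : ℝ :=
  sSup ((fun v => F v / (v.length : ℝ)) '' {v | v ∈ W ∧ v.length = n})

/-- Condition (SET): the uniform subadditive ergodic theorem holds, i.e. for every
subadditive `F` the limit `lim_{|w|→∞} F(w)/|w|` exists and equals `inf_{n ≥ 1} F^(n)`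
(in the extended reals). -/
def SET (W : Set (List A)) : Prop :=
  ∀ F : List A → ℝ, IsSubadditive W F →
    Filter.Tendsto (fun w => ((F w / (w.length : ℝ) : ℝ) : EReal)) (wordsFilter W)
      (nhds (⨅ n : {n : ℕ // 1 ≤ n}, ((wordSup W F n.1 : ℝ) : EReal)))

/-- A Banach-space-valued function `F : W → B` is additive. -/
def IsAdditive {B : Type*} [SeminormedAddCommGroup B] (W : Set (List A))
    (F : List A → B) : Prop :=
  ∃ D : ℝ, 0 < D ∧ ∃ c : ℕ → ℝ, Antitone c ∧ (∀ n, 0 ≤ c n) ∧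
    Filter.Tendsto c Filter.atTop (nhds 0) ∧
    (∀ vs : List (List A), (∀ v ∈ vs, v ∈ W) → vs.flatten ∈ W →
      ‖F vs.flatten - (vs.map F).sum‖ ≤ (vs.map fun v => c v.length * (v.length : ℝ)).sum) ∧
    ∀ v ∈ W, ‖F v‖ ≤ D * (v.length : ℝ)

/-- Condition (HP): powers in `W` have uniformly bounded exponent. -/
def HP (W : Set (List A)) : Prop :=
  ∃ N : ℕ, 0 < N ∧ ∀ v : List A, v ≠ [] → ∀ k : ℕ,
    (List.replicate k v).flatten ∈ W → k ≤ N

/-- Condition (PW): uniform positivity of weights. -/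
def PW (W : Set (List A)) : Prop :=
  ∃ E : ℝ, 0 < E ∧ ∀ v ∈ W, v ≠ [] →
    (E : EReal) ≤ liminfWords W (fun w => ((occ v w * v.length : ℕ) : ℝ) / (w.length : ℝ))

/-- Linear repetitivity. -/
def LinearlyRepetitive (W : Set (List A)) : Prop :=
  ∃ D : ℝ, 0 < D ∧ ∀ v ∈ W, v ≠ [] → ∀ w ∈ W, D * (v.length : ℝ) ≤ (w.length : ℝ) →
    v <:+: w

/-- Aperiodicity: no element of `Ω` is periodic. -/
def Aperiodic (Ω : Set (ℤ → A)) : Prop :=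
  ∀ ω ∈ Ω, ∀ p : ℕ, 1 ≤ p → shiftZ (p : ℤ) ω ≠ ω

/-- `m(n)`: the minimal length of a return word of a word of length `n` in `W`. -/
noncomputable def mRet (W : Set (List A)) (n : ℕ) : ℕ :=
  sInf {k : ℕ | ∃ v z : List A, v ∈ W ∧ v.length = n ∧ IsReturnWord W z v ∧ z.length = k}

/-- `k_ω^w`: the minimal nonnegative position at which `w` occurs in `ω`. -/
noncomputable def firstOcc (ω : ℤ → A) (w : List A) : ℕ :=
  sInf {k : ℕ | OccursAt w ω (k : ℤ)}

/-- `F_ω(w) = ∑_{j=0}^{|w|-1} f(T^{k_ω^w + j} ω)`. -/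
noncomputable def birkhoffF {B : Type*} [AddCommMonoid B] (f : (ℤ → A) → B)
    (ω : ℤ → A) (w : List A) : B :=
  ∑ j ∈ Finset.range w.length, f (shiftZ ((firstOcc ω w : ℤ) + (j : ℤ)) ω)

/-!
(PQ) ⇒ (SET). Cutting a word into blocks of length `m` gives `F w ≤ |w| F^(m) + c_m`, so
`limsup F w / |w| ≤ F^(m)` for every `m`. Conversely, if a long word `w` had `F w / |w|`
noticeably below `F^(m)`, then by (PQ) every long word `z` contains disjoint copies of `w`
covering a fixed proportion of `z`; cutting `z` at these copies and into blocks of length `m`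
in between pushes `F^(|z|)` below the infimum of the `F^(n)`.

(SET) ⇒ (PQ). Applied to the subadditive `u ↦ |u| - l_v(u)`, (SET) makes `l_v(u) / |u|`
converge, necessarily to `ν(v)`. Minimality makes each `ν(v)` positive, so if (PQ) fails there
are arbitrarily long words with arbitrarily small `ν`. Choose such words `V k` recursively, the
density of `V k` being below `2^(-k-2)` in all words of length at least `M k`, and `V (k + 1)`
longer than `M k`. Then `F u = |u| - ∑ₖ l_{V k}(u)` is subadditive, but `F w / |w|` is `≤ 0`
along the `V k` and `≥ 1/2` along words of the lengths `M k`, so it has no limit.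
-/

def IsFactorClosed (W : Set (List A)) : Prop :=
  ∀ ⦃w v : List A⦄, w ∈ W → v <:+: w → v ∈ W

section Factors

lemma OccursAt.of_append {s v t : List A} {ω : ℤ → A} {k : ℤ}
    (h : OccursAt (s ++ v ++ t) ω k) : OccursAt v ω (k + s.length) := by
  intro i
  have hi := h ⟨s.length + i, by simp; omega⟩
  simp only [List.get_eq_getElem, List.append_assoc] at hi ⊢
  rw [List.getElem_append_right (by omega)] at hi
  simp only [Nat.add_sub_cancel_left, List.getElem_append_left i.isLt] at hi
  rw [← hi]
  push_cast
  ring_nf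

lemma words_isFactorClosed (Ω : Set (ℤ → A)) : IsFactorClosed (words Ω) := by
  rintro w v ⟨ω, hω, k, hk⟩ ⟨s, t, rfl⟩
  exact ⟨ω, hω, _, hk.of_append⟩

lemma exists_mem_words_length_eq {Ω : Set (ℤ → A)} (hne : Ω.Nonempty) (n : ℕ) :
    ∃ w ∈ words Ω, w.length = n := by
  obtain ⟨ω, hω⟩ := hne
  exact ⟨List.ofFn fun i : Fin n => ω i, ⟨ω, hω, 0, fun i => by simp⟩, by simp⟩

lemma infix_of_occursAt {u v : List A} {ω : ℤ → A} {k : ℤ} {j : ℕ}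
    (hu : OccursAt u ω k) (hv : OccursAt v ω (k + j)) (hj : j + v.length ≤ u.length) :
    v <:+: u := by
  have hv' : v = (u.drop j).take v.length := by
    refine List.ext_getElem (by simp; omega) fun i h₁ h₂ => ?_
    have hu' := hu ⟨j + i, by omega⟩
    have hv' := hv ⟨i, h₁⟩
    simp only [List.get_eq_getElem, List.getElem_take, List.getElem_drop] at hu' hv' ⊢
    rw [← hu', ← hv']
    push_cast
    ring_nf
  rw [hv']
  exact (List.take_prefix _ _).isInfix.trans (List.drop_suffix _ _).isInfix

lemma OccursIn.append_left {v a : List A} (b : List A) {i : ℕ} (h : OccursIn v a i) :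
    OccursIn v (a ++ b) i := by
  refine ⟨by simp; grind [OccursIn], ?_⟩
  rw [List.drop_append_of_le_length (by grind [OccursIn])]
  exact h.2.trans (List.prefix_append _ _)

lemma OccursIn.append_right {v b : List A} (a : List A) {i : ℕ} (h : OccursIn v b i) :
    OccursIn v (a ++ b) (a.length + i) :=
  ⟨by simp; grind [OccursIn], by rw [List.drop_length_add_append]; exact h.2⟩

lemma OccursIn.drop {v u : List A} {d p : ℕ} (h : OccursIn v u p) (hd : d ≤ p) :
    OccursIn v (u.drop d) (p - d) :=
  ⟨by simp; grind [OccursIn], by rw [List.drop_drop, Nat.add_sub_cancel' hd]; exact h.2⟩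

lemma occursIn_of_infix {v w : List A} (h : v <:+: w) : ∃ i, OccursIn v w i := by
  obtain ⟨s, t, rfl⟩ := h
  exact ⟨s.length, by simp, by rw [List.append_assoc, List.drop_left]; exact List.prefix_append _ _⟩

end Factors

section WordsFilter

variable {W : Set (List A)}

lemma eventually_wordsFilter {p : List A → Prop} :
    (∀ᶠ w in wordsFilter W, p w) ↔ ∃ L : ℕ, ∀ w ∈ W, L ≤ w.length → p w := by
  have hdir : Directed (· ≥ ·) fun L : ℕ => 𝓟 {w | w ∈ W ∧ L ≤ w.length} := fun a b =>
    ⟨max a b, principal_mono.2 fun _ hw => ⟨hw.1, (le_max_left a b).trans hw.2⟩,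
      principal_mono.2 fun _ hw => ⟨hw.1, (le_max_right a b).trans hw.2⟩⟩
  simp only [Filter.Eventually, wordsFilter, mem_iInf_of_directed hdir, mem_principal]
  exact exists_congr fun L => ⟨fun h w hw hL => h ⟨hw, hL⟩, fun h w hw => h w hw.1 hw.2⟩

lemma frequently_wordsFilter {p : List A → Prop} :
    (∃ᶠ w in wordsFilter W, p w) ↔ ∀ L : ℕ, ∃ w ∈ W, L ≤ w.length ∧ p w := by
  simp only [Filter.Frequently, eventually_wordsFilter]
  push Not
  rfl

lemma eventually_mem_wordsFilter : ∀ᶠ w in wordsFilter W, w ∈ W :=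
  eventually_wordsFilter.2 ⟨0, fun _ hw _ => hw⟩

lemma eventually_le_length_wordsFilter (L : ℕ) : ∀ᶠ w in wordsFilter W, L ≤ w.length :=
  eventually_wordsFilter.2 ⟨L, fun _ _ h => h⟩

lemma wordsFilter_neBot (h : ∀ n, ∃ w ∈ W, w.length = n) : (wordsFilter W).NeBot :=
  frequently_true_iff_neBot _ |>.1 <| frequently_wordsFilter.2 fun L =>
    (h L).imp fun _ hw => ⟨hw.1, hw.2.ge, trivial⟩

end WordsFilter

section Packings

/-- `maxDisjoint v w` is `sSup (packings v w)` by definition. -/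
def packings (v w : List A) : Set ℕ :=
  {m : ℕ | ∃ s : Fin m → ℕ, (∀ i, OccursIn v w (s i)) ∧
    ∀ i j : Fin m, i < j → s i + v.length ≤ s j}

variable {v : List A}

lemma mem_packings_iff {w : List A} {m : ℕ} :
    m ∈ packings v w ↔ ∃ s : ℕ → ℕ, (∀ i < m, OccursIn v w (s i)) ∧
      ∀ i j, i < j → j < m → s i + v.length ≤ s j := by
  constructor
  · rintro ⟨s, hocc, hord⟩
    refine ⟨fun n => if h : n < m then s ⟨n, h⟩ else 0, fun i hi => ?_, fun i j hij hj => ?_⟩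
    · simpa only [dif_pos hi] using hocc _
    · simpa only [dif_pos (hij.trans hj), dif_pos hj] using hord ⟨i, hij.trans hj⟩ ⟨j, hj⟩ hij
  · rintro ⟨s, hocc, hord⟩
    exact ⟨fun i => s i, fun i => hocc i i.isLt, fun i j hij => hord i j hij j.isLt⟩

lemma zero_mem_packings (v w : List A) : 0 ∈ packings v w :=
  mem_packings_iff.2 ⟨fun _ => 0, by omega, by omega⟩

lemma mul_length_le_of_mem_packings {w : List A} {m : ℕ} (hm : m ∈ packings v w) :
    m * v.length ≤ w.length := by
  obtain ⟨s, hocc, hord⟩ := mem_packings_iff.1 hm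
  have hpos : ∀ j < m, j * v.length ≤ s j := by
    intro j hj
    induction j with
    | zero => simp
    | succ n ih => grind [hord n (n + 1) (by omega) hj]
  cases m with
  | zero => simp
  | succ n => grind [hpos n (by omega), (hocc n (by omega)).1]

lemma packings_bddAbove {w : List A} (hv : v ≠ []) : BddAbove (packings v w) :=
  ⟨w.length, fun m hm => (Nat.le_mul_of_pos_right m (List.length_pos_iff.2 hv)).trans
    (mul_length_le_of_mem_packings hm)⟩

lemma exists_append_of_succ_mem_packings {u : List A} {k : ℕ} (h : k + 1 ∈ packings v u) :
    ∃ g r, u = g ++ (v ++ r) ∧ k ∈ packings v r := by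
  obtain ⟨s, hocc, hord⟩ := mem_packings_iff.1 h
  obtain ⟨hlen, r, hr⟩ := hocc 0 (by omega)
  have hr' : r = u.drop (s 0 + v.length) := by
    rw [← List.drop_drop, ← hr, List.drop_left]
  refine ⟨u.take (s 0), r, by rw [hr, List.take_append_drop], mem_packings_iff.2
    ⟨fun i => s (i + 1) - (s 0 + v.length), fun i hi => ?_, fun i j hij hj => ?_⟩⟩
  · rw [hr']
    exact (hocc (i + 1) (by omega)).drop (hord 0 (i + 1) (by omega) (by omega))
  · grind [hord (i + 1) (j + 1) (by omega) (by omega), hord 0 (i + 1) (by omega) (by omega)]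

lemma maxDisjoint_mem_packings (hv : v ≠ []) (w : List A) : maxDisjoint v w ∈ packings v w :=
  Nat.sSup_mem ⟨0, zero_mem_packings v w⟩ (packings_bddAbove hv)

lemma le_maxDisjoint (hv : v ≠ []) {w : List A} {m : ℕ} (hm : m ∈ packings v w) :
    m ≤ maxDisjoint v w :=
  le_csSup (packings_bddAbove hv) hm

lemma maxDisjoint_mul_length_le (hv : v ≠ []) (w : List A) :
    maxDisjoint v w * v.length ≤ w.length :=
  mul_length_le_of_mem_packings (maxDisjoint_mem_packings hv w)

lemma maxDisjoint_eq_zero_of_length_lt (hv : v ≠ []) {w : List A} (h : w.length < v.length) :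
    maxDisjoint v w = 0 := by
  have := maxDisjoint_mul_length_le hv w
  by_contra h0
  nlinarith [Nat.pos_of_ne_zero h0]

lemma one_le_maxDisjoint_of_infix (hv : v ≠ []) {w : List A} (h : v <:+: w) :
    1 ≤ maxDisjoint v w := by
  obtain ⟨i, hi⟩ := occursIn_of_infix h
  exact le_maxDisjoint hv (mem_packings_iff.2 ⟨fun _ => i, fun _ _ => hi, by omega⟩)

lemma maxDisjoint_add_maxDisjoint_le (hv : v ≠ []) (a b : List A) :
    maxDisjoint v a + maxDisjoint v b ≤ maxDisjoint v (a ++ b) := by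
  obtain ⟨s, hs, hs'⟩ := mem_packings_iff.1 (maxDisjoint_mem_packings hv a)
  obtain ⟨t, ht, ht'⟩ := mem_packings_iff.1 (maxDisjoint_mem_packings hv b)
  set m := maxDisjoint v a
  refine le_maxDisjoint hv (mem_packings_iff.2
    ⟨fun n => if n < m then s n else a.length + t (n - m), fun i hi => ?_, fun i j hij hj => ?_⟩)
  · by_cases h : i < m
    · simpa only [if_pos h] using (hs i h).append_left b
    · simpa only [if_neg h] using (ht (i - m) (by omega)).append_right a
  · by_cases hi : i < m <;> by_cases hj' : j < m
    · simpa only [if_pos hi, if_pos hj'] using hs' i j hij hj'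
    · simp only [if_pos hi, if_neg hj']
      grind [OccursIn, hs i hi]
    · omega
    · simp only [if_neg hi, if_neg hj']
      grind [ht' (i - m) (j - m) (by omega) (by omega)]

lemma length_div_le_maxDisjoint {W : Set (List A)} (hW : IsFactorClosed W) (hv : v ≠ []) {R : ℕ}
    (hR : ∀ u ∈ W, R ≤ u.length → v <:+: u) {u : List A} (hu : u ∈ W) :
    u.length / R ≤ maxDisjoint v u := by
  induction h : u.length using Nat.strong_induction_on generalizing u with
  | _ n ih =>
    rcases Nat.eq_zero_or_pos R with rfl | hR0
    · simp
    rcases lt_or_ge n R with hn | hn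
    · simp [Nat.div_eq_of_lt hn]
    rw [← List.take_append_drop R u]
    have h1 := one_le_maxDisjoint_of_infix hv (hR _ (hW hu (List.take_prefix R u).isInfix)
      (by simp; omega))
    have h2 := ih (n - R) (by omega) (hW hu (List.drop_suffix R u).isInfix) (by simp; omega)
    have h3 := maxDisjoint_add_maxDisjoint_le hv (u.take R) (u.drop R)
    have : n / R = (n - R) / R + 1 := by
      rw [Nat.div_eq_sub_div hR0 hn]
    omega

end Packings

section Subadditive

variable {W : Set (List A)} {F : List A → ℝ}

lemma div_le_wordSup [Finite A] {u : List A} (hu : u ∈ W) :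
    F u / u.length ≤ wordSup W F u.length :=
  le_csSup (((List.finite_length_eq A u.length).subset fun _ h => h.2).image _).bddAbove
    ⟨u, ⟨hu, rfl⟩, rfl⟩

lemma wordSup_le {n : ℕ} {x : ℝ} (hn : ∃ w ∈ W, w.length = n)
    (h : ∀ u ∈ W, u.length = n → F u / n ≤ x) : wordSup W F n ≤ x := by
  obtain ⟨w, hw, rfl⟩ := hn
  refine csSup_le ⟨_, w, ⟨hw, rfl⟩, rfl⟩ ?_
  rintro _ ⟨u, ⟨hu, hl⟩, rfl⟩
  simpa only [hl] using h u hu hl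

noncomputable def blockError (W : Set (List A)) (F : List A → ℝ) (m : ℕ) : ℝ :=
  sSup ((fun u => F u - u.length * wordSup W F m) '' {u | u ∈ W ∧ u.length < m}) ⊔ 0

lemma sub_le_blockError [Finite A] {m : ℕ} {u : List A} (hu : u ∈ W) (hm : u.length < m) :
    F u - u.length * wordSup W F m ≤ blockError W F m :=
  have hfin : {u : List A | u ∈ W ∧ u.length < m}.Finite :=
    (List.finite_length_le A m).subset fun _ h => h.2.le
  (le_csSup (hfin.image (fun u => F u - u.length * wordSup W F m)).bddAbove
    ⟨u, ⟨hu, hm⟩, rfl⟩).trans (le_max_left _ _)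

lemma IsSubadditive.le_length_mul_wordSup_add [Finite A] (hW : IsFactorClosed W)
    (hF : IsSubadditive W F) {m : ℕ} (hm : 1 ≤ m) {u : List A} (hu : u ∈ W) :
    F u ≤ u.length * wordSup W F m + blockError W F m := by
  induction h : u.length using Nat.strong_induction_on generalizing u with
  | _ n ih =>
    rcases lt_or_ge n m with hn | hn
    · have := sub_le_blockError (F := F) hu (h ▸ hn)
      rw [h] at this
      linarith
    have ht : u.take m ∈ W := hW hu (List.take_prefix m u).isInfix
    have hd : u.drop m ∈ W := hW hu (List.drop_suffix m u).isInfix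
    have htl : (u.take m).length = m := by simp; omega
    have hsplit := hF _ _ ht hd (by rwa [List.take_append_drop])
    rw [List.take_append_drop] at hsplit
    have h1 := div_le_wordSup (F := F) ht
    rw [htl, div_le_iff₀ (by exact_mod_cast hm)] at h1
    have h2 := ih (n - m) (by omega) hd (by simp; omega)
    push_cast [hn] at h2
    nlinarith

lemma IsSubadditive.le_of_mem_packings [Finite A] (hW : IsFactorClosed W)
    (hF : IsSubadditive W F) {m : ℕ} (hm : 1 ≤ m) {v : List A} (hv : v ∈ W) {k : ℕ}
    {u : List A} (hu : u ∈ W) (hk : k ∈ packings v u) :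
    F u ≤ k * F v + (u.length - k * v.length) * wordSup W F m + (k + 1) * blockError W F m := by
  induction k generalizing u with
  | zero => simpa using hF.le_length_mul_wordSup_add hW hm hu
  | succ k ih =>
    obtain ⟨g, r, rfl, hr⟩ := exists_append_of_succ_mem_packings hk
    have hvr : v ++ r ∈ W := hW hu (List.suffix_append _ _).isInfix
    have hrW : r ∈ W := hW hvr (List.suffix_append _ _).isInfix
    have hg := hF.le_length_mul_wordSup_add hW hm (hW hu (List.prefix_append _ _).isInfix)
    have h1 := hF _ _ (hW hu (List.prefix_append _ _).isInfix) hvr hu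
    have h2 := hF _ _ hv hrW hvr
    have h3 := ih hrW hr
    simp only [List.length_append]
    push_cast
    linarith

lemma IsSubadditive.eventually_div_length_lt [Finite A] (hW : IsFactorClosed W)
    (hF : IsSubadditive W F) {m : ℕ} (hm : 1 ≤ m) {b : ℝ} (hb : wordSup W F m < b) :
    ∀ᶠ w in wordsFilter W, F w / w.length < b := by
  set δ := b - wordSup W F m
  filter_upwards [eventually_mem_wordsFilter,
    eventually_le_length_wordsFilter (⌈blockError W F m / δ⌉₊ + 1)] with w hw hL
  have hlen : blockError W F m / δ < w.length := Nat.lt_of_ceil_lt (by omega)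
  rw [div_lt_iff₀ (by simp only [δ]; linarith)] at hlen
  rw [div_lt_iff₀ (by norm_cast; omega)]
  have := hF.le_length_mul_wordSup_add hW hm hw
  simp only [δ] at hlen
  nlinarith

end Subadditive

section PQImpliesSET

variable {W : Set (List A)} {F : List A → ℝ}

noncomputable def packingDensity (v w : List A) : ℝ :=
  ((maxDisjoint v w * v.length : ℕ) : ℝ) / (w.length : ℝ)

lemma nu_eq_liminf (W : Set (List A)) (v : List A) :
    nu W v = liminf (fun w => (packingDensity v w : EReal)) (wordsFilter W) := rfl

lemma eventually_lt_packingDensity {v : List A} {c : ℝ} (h : (c : EReal) < nu W v) :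
    ∀ᶠ w in wordsFilter W, c < packingDensity v w := by
  filter_upwards [eventually_lt_of_lt_liminf h] with w hw
  exact EReal.coe_lt_coe_iff.1 hw

lemma IsSubadditive.exists_wordSup_le_of_PQ [Finite A] (hW : IsFactorClosed W)
    (hlen : ∀ n, ∃ w ∈ W, w.length = n) (hF : IsSubadditive W F)
    {C : ℝ} (hC : 0 < C) (hPQ : ∀ v ∈ W, v ≠ [] → (C : EReal) ≤ nu W v)
    {m : ℕ} (hm : 1 ≤ m) {ε : ℝ} (hε : 0 < ε) :
    ∀ᶠ w in wordsFilter W, F w / w.length ≤ wordSup W F m - ε →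
      ∃ n ≥ 1, wordSup W F n ≤ wordSup W F m - C * ε / 4 := by
  set S := wordSup W F m
  set c := blockError W F m
  filter_upwards [eventually_mem_wordsFilter,
    eventually_le_length_wordsFilter (⌈16 * c / (C * ε)⌉₊ + 1)] with w hw hL hFw
  have hw0 : w ≠ [] := List.ne_nil_of_length_pos (by omega)
  have hwpos : (0 : ℝ) < w.length := by norm_cast; omega
  have hc : 16 * c ≤ C * ε * w.length := by
    have := Nat.lt_of_ceil_lt (a := 16 * c / (C * ε)) (n := w.length) (by omega)
    rw [div_lt_iff₀ (by positivity)] at this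
    linarith
  rw [div_le_iff₀ hwpos] at hFw
  obtain ⟨L, hL⟩ := eventually_wordsFilter.1 <| eventually_lt_packingDensity
    ((EReal.coe_lt_coe_iff.2 (half_lt_self hC)).trans_le (hPQ w hw hw0))
  refine ⟨max L w.length, by omega, wordSup_le (hlen _) fun z hz hzn => ?_⟩
  set n := max L w.length
  set k := maxDisjoint w z
  have hnpos : (0 : ℝ) < n := by norm_cast; omega
  have hwn : (w.length : ℝ) ≤ n := by norm_cast; omega
  have hdense : C / 2 * n < k * w.length := by
    have := hL z hz (by omega)
    rw [packingDensity, hzn, lt_div_iff₀ hnpos, Nat.cast_mul] at this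
    linarith
  have hkn : (k : ℝ) * w.length ≤ n := by
    exact_mod_cast hzn ▸ maxDisjoint_mul_length_le hw0 z
  have hpack : F z ≤ k * F w + (n - k * w.length) * S + (k + 1) * c := by
    have := hF.le_of_mem_packings hW hm hw hz (maxDisjoint_mem_packings hw0 z)
    rwa [hzn] at this
  have h1 : k * F w ≤ k * w.length * (S - ε) := by
    nlinarith [mul_le_mul_of_nonneg_left hFw (Nat.cast_nonneg k)]
  have h2 : (k + 1) * c ≤ n * (C * ε) / 8 := by
    have hkw : ((k : ℝ) + 1) * w.length ≤ 2 * n := by linarith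
    nlinarith [mul_le_mul_of_nonneg_left hc (by positivity : (0 : ℝ) ≤ k + 1),
      mul_le_mul_of_nonneg_left hkw (by positivity : (0 : ℝ) ≤ C * ε)]
  rw [div_le_iff₀ hnpos]
  nlinarith [mul_lt_mul_of_pos_right hdense hε, mul_pos (mul_pos hC hε) hnpos]

theorem SET_of_PQ [Finite A] (hW : IsFactorClosed W) (hlen : ∀ n, ∃ w ∈ W, w.length = n)
    (h : PQ W) : SET W := by
  obtain ⟨C, hC, hPQ⟩ := h
  intro F hF
  set Λ := ⨅ n : {n : ℕ // 1 ≤ n}, ((wordSup W F n.1 : ℝ) : EReal)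
  have hΛ : ∀ n, 1 ≤ n → Λ ≤ wordSup W F n := fun n hn =>
    iInf_le (fun n : {n : ℕ // 1 ≤ n} => ((wordSup W F n.1 : ℝ) : EReal)) ⟨n, hn⟩
  rw [tendsto_order]
  refine ⟨fun a ha => ?_, fun b hb => ?_⟩
  · obtain ⟨l, hl⟩ : ∃ l : ℝ, Λ = l := ⟨Λ.toReal, (EReal.coe_toReal
      (ne_top_of_le_ne_top (EReal.coe_ne_top _) (hΛ 1 le_rfl)) (ne_bot_of_gt ha)).symm⟩
    obtain ⟨y, hay, hyl⟩ := EReal.exists_between_coe_real (hl ▸ ha)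
    rw [EReal.coe_lt_coe_iff] at hyl
    obtain ⟨⟨m, hm⟩, hSm⟩ := iInf_lt_iff.1 <| hl ▸
      EReal.coe_lt_coe_iff.2 (by nlinarith : l < l + C * (l - y) / 4)
    rw [EReal.coe_lt_coe_iff] at hSm
    -- if `F w / |w| ≤ y = l - (l - y)`, some `F^(n)` would drop below `l`
    filter_upwards [hF.exists_wordSup_le_of_PQ hW hlen hC hPQ hm (sub_pos.2 hyl)] with w hw
    refine hay.trans (EReal.coe_lt_coe_iff.2 (lt_of_not_ge fun hwy => ?_))
    have hlm := EReal.coe_le_coe_iff.1 (hl ▸ hΛ m hm)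
    obtain ⟨n, hn, hSn⟩ := hw (by linarith)
    have := EReal.coe_le_coe_iff.1 (hl ▸ hΛ n hn)
    nlinarith
  · obtain ⟨⟨m, hm⟩, hSm⟩ := iInf_lt_iff.1 hb
    obtain ⟨z, hSz, hzb⟩ := EReal.exists_between_coe_real hSm
    filter_upwards [hF.eventually_div_length_lt hW hm (EReal.coe_lt_coe_iff.1 hSz)] with w hw
    exact (EReal.coe_lt_coe_iff.2 hw).trans hzb

end PQImpliesSET

section Minimality

variable {Ω : Set (ℤ → A)}

lemma shift_injective : Function.Injective (shift : (ℤ → A) → ℤ → A) := fun _ _ h =>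
  funext fun n => by simpa [shift] using congrFun h (n - 1)

lemma shiftZ_add_one (n : ℤ) (ω : ℤ → A) : shiftZ (n + 1) ω = shift (shiftZ n ω) :=
  funext fun k => by simp only [shiftZ, shift]; ring_nf

lemma occursAt_shiftZ_iff {v : List A} {ω : ℤ → A} {n k : ℤ} :
    OccursAt v (shiftZ n ω) k ↔ OccursAt v ω (k + n) :=
  forall_congr' fun i => by rw [shiftZ, add_right_comm]

variable [TopologicalSpace A]

lemma shift_mem_iff (hΩ : IsSubshift Ω) {ω : ℤ → A} : shift ω ∈ Ω ↔ ω ∈ Ω := by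
  nth_rewrite 1 [← hΩ.2]
  exact shift_injective.mem_set_image

lemma shiftZ_mem_iff (hΩ : IsSubshift Ω) {ω : ℤ → A} (n : ℤ) : shiftZ n ω ∈ Ω ↔ ω ∈ Ω := by
  induction n using Int.induction_on with
  | zero => rw [show shiftZ 0 ω = ω from funext fun k => by simp [shiftZ]]
  | succ n ih => rw [shiftZ_add_one, shift_mem_iff hΩ, ih]
  | pred n ih => rw [← ih, ← shift_mem_iff hΩ, ← shiftZ_add_one, sub_add_cancel]

variable [DiscreteTopology A]

lemma isOpen_setOf_occursAt (v : List A) (p : ℤ) : IsOpen {ρ : ℤ → A | OccursAt v ρ p} := by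
  have : {ρ : ℤ → A | OccursAt v ρ p} =
      ⋂ i : Fin v.length, (fun ρ => ρ (p + i)) ⁻¹' {v.get i} := by
    ext; simp [OccursAt]
  rw [this]
  exact isOpen_iInter_of_finite fun i => (isOpen_discrete _).preimage (continuous_apply _)

lemma exists_occursAt_of_isMinimal (hmin : IsMinimal Ω) {v : List A} (hv : v ∈ words Ω)
    {σ : ℤ → A} (hσ : σ ∈ Ω) : ∃ p, OccursAt v σ p := by
  obtain ⟨ω, hω, k, hk⟩ := hv
  obtain ⟨_, hocc, m, rfl⟩ := mem_closure_iff.1 (hmin σ hσ hω) _ (isOpen_setOf_occursAt v k) hk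
  exact ⟨k + m, occursAt_shiftZ_iff.1 hocc⟩

lemma exists_forall_not_occursAt [Finite A] (hΩ : IsSubshift Ω) {v : List A}
    (h : ∀ n : ℕ, ∃ ρ ∈ Ω, ∀ p : ℤ, |p| ≤ n → ¬OccursAt v ρ p) :
    ∃ σ ∈ Ω, ∀ p, ¬OccursAt v σ p := by
  set t : ℕ → Set (ℤ → A) := fun n => Ω ∩ ⋂ (p : ℤ) (_ : |p| ≤ n), {ρ | OccursAt v ρ p}ᶜ
  have ht : ∀ n, IsClosed (t n) := fun n => hΩ.1.inter <| isClosed_iInter fun p =>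
    isClosed_iInter fun _ => (isOpen_setOf_occursAt v p).isClosed_compl
  obtain ⟨σ, hσ⟩ := IsCompact.nonempty_iInter_of_sequence_nonempty_isCompact_isClosed t
    (fun n => Set.inter_subset_inter_right _ <| Set.iInter₂_mono' fun p hp =>
      ⟨p, hp.trans (by push_cast; linarith), le_rfl⟩)
    (fun n => by simpa [t, Set.Nonempty] using h n) (ht 0).isCompact ht
  simp only [t, Set.mem_iInter, Set.mem_inter_iff] at hσ
  exact ⟨σ, (hσ 0).1, fun p => (hσ p.natAbs).2 p (by simp)⟩

lemma exists_pos_forall_infix [Finite A] (hΩ : IsSubshift Ω) (hmin : IsMinimal Ω) {v : List A}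
    (hv : v ∈ words Ω) : ∃ R > 0, ∀ u ∈ words Ω, R ≤ u.length → v <:+: u := by
  by_contra! hcon
  obtain ⟨σ, hσ, hfree⟩ := exists_forall_not_occursAt hΩ (v := v) fun n => by
    obtain ⟨u, ⟨ω, hω, k, hk⟩, hlen, hvu⟩ := hcon (2 * n + v.length + 1) (by omega)
    refine ⟨shiftZ (k + n) ω, (shiftZ_mem_iff hΩ _).2 hω, fun p hp hocc => hvu ?_⟩
    rw [abs_le] at hp
    refine infix_of_occursAt hk (j := (p + n).toNat) ?_ (by omega)
    rw [occursAt_shiftZ_iff] at hocc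
    convert hocc using 1
    omega
  obtain ⟨p, hp⟩ := exists_occursAt_of_isMinimal hmin hv hσ
  exact hfree p hp

lemma nu_pos [Finite A] (hΩ : IsSubshift Ω) (hmin : IsMinimal Ω) {v : List A}
    (hv : v ∈ words Ω) (hv0 : v ≠ []) : 0 < nu (words Ω) v := by
  obtain ⟨R, hR0, hR⟩ := exists_pos_forall_infix hΩ hmin hv
  have hvpos : (0 : ℝ) < v.length := by exact_mod_cast List.length_pos_iff.2 hv0
  refine (EReal.coe_pos.2 (by positivity : (0 : ℝ) < v.length / (2 * R))).trans_le ?_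
  rw [nu_eq_liminf]
  refine le_liminf_of_le (by isBoundedDefault) ?_
  filter_upwards [eventually_mem_wordsFilter, eventually_le_length_wordsFilter R] with u hu hRu
  have hq := length_div_le_maxDisjoint (words_isFactorClosed Ω) hv0 hR hu
  have hlt := Nat.lt_div_mul_add (a := u.length) hR0
  have hq1 := Nat.div_pos hRu hR0
  have hu2 : u.length ≤ 2 * R * maxDisjoint v u := by nlinarith
  have hupos : (0 : ℝ) < u.length := by norm_cast; omega
  rw [EReal.coe_le_coe_iff, packingDensity, div_le_div_iff₀ (by positivity) hupos]
  push_cast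
  nlinarith [mul_le_mul_of_nonneg_right
    (by exact_mod_cast hu2 : (u.length : ℝ) ≤ 2 * R * maxDisjoint v u) hvpos.le]

end Minimality

section SETImpliesPQ

variable {W : Set (List A)}

lemma SET.exists_tendsto (hlen : ∀ n, ∃ w ∈ W, w.length = n) (hSET : SET W)
    {F : List A → ℝ} (hF : IsSubadditive W F) {a b : ℝ}
    (hab : ∀ᶠ w in wordsFilter W, F w / w.length ∈ Set.Icc a b) :
    ∃ r : ℝ, Tendsto (fun w => F w / w.length) (wordsFilter W) (𝓝 r) := by
  have := wordsFilter_neBot hlen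
  have hlim := hSET F hF
  have hmem := isClosed_Icc.mem_of_tendsto hlim <| hab.mono fun w hw =>
    ⟨EReal.coe_le_coe_iff.2 hw.1, EReal.coe_le_coe_iff.2 hw.2⟩
  set Λ := ⨅ n : {n : ℕ // 1 ≤ n}, ((wordSup W F n.1 : ℝ) : EReal)
  obtain ⟨r, hr⟩ : ∃ r : ℝ, Λ = r := ⟨Λ.toReal, (EReal.coe_toReal
    (ne_top_of_le_ne_top (EReal.coe_ne_top b) hmem.2)
    (ne_bot_of_le_ne_bot (EReal.coe_ne_bot a) hmem.1)).symm⟩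
  exact ⟨r, EReal.tendsto_coe.1 (hr ▸ hlim)⟩

lemma SET.tendsto_packingDensity (hlen : ∀ n, ∃ w ∈ W, w.length = n) (hSET : SET W)
    {v : List A} (hv : v ≠ []) :
    ∃ r : ℝ, nu W v = r ∧ Tendsto (packingDensity v) (wordsFilter W) (𝓝 r) := by
  have := wordsFilter_neBot hlen
  set F : List A → ℝ := fun u => u.length - ((maxDisjoint v u * v.length : ℕ) : ℝ)
  have hF : IsSubadditive W F := fun a b _ _ _ => by
    have : ((maxDisjoint v a + maxDisjoint v b) * v.length : ℝ)
        ≤ maxDisjoint v (a ++ b) * v.length := by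
      exact_mod_cast Nat.mul_le_mul_right v.length (maxDisjoint_add_maxDisjoint_le hv a b)
    simp only [F, List.length_append]
    push_cast
    linarith
  have hdens : ∀ᶠ u in wordsFilter W, packingDensity v u = 1 - F u / u.length := by
    filter_upwards [eventually_le_length_wordsFilter 1] with u hu
    rw [packingDensity, sub_div, div_self (Nat.cast_pos.2 hu).ne', sub_sub_cancel]
  obtain ⟨r, hr⟩ := hSET.exists_tendsto hlen hF (a := 0) (b := 1) <| by
    filter_upwards [hdens, eventually_le_length_wordsFilter 1] with u hu hu1
    have h0 : 0 ≤ packingDensity v u := by unfold packingDensity; positivity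
    have h1 : packingDensity v u ≤ 1 := by
      rw [packingDensity, div_le_one (Nat.cast_pos.2 hu1)]
      exact_mod_cast maxDisjoint_mul_length_le hv u
    constructor <;> linarith
  have hlim := (tendsto_const_nhds.sub hr).congr' (hdens.mono fun _ h => h.symm)
  exact ⟨1 - r, (EReal.tendsto_coe.2 hlim).liminf_eq, hlim⟩

lemma exists_pos_le_nu_of_length_le [Finite A] (hpos : ∀ v ∈ W, v ≠ [] → 0 < nu W v)
    (N : ℕ) : ∃ c : ℝ, 0 < c ∧ ∀ v ∈ W, v ≠ [] → v.length ≤ N → (c : EReal) ≤ nu W v := by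
  have hfin : {v | v ∈ W ∧ v ≠ [] ∧ v.length ≤ N}.Finite :=
    (List.finite_length_le A N).subset fun _ h => h.2.2
  have hev : ∀ᶠ c : ℝ in 𝓝[>] 0, ∀ v ∈ {v | v ∈ W ∧ v ≠ [] ∧ v.length ≤ N},
      (c : EReal) ≤ nu W v := by
    refine (eventually_all_finite hfin).2 fun v hv => ?_
    obtain ⟨r, hr0, hr⟩ := EReal.exists_between_coe_real (hpos v hv.1 hv.2.1)
    filter_upwards [nhdsWithin_le_nhds (eventually_lt_nhds (EReal.coe_pos.1 hr0))] with c hc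
    exact (EReal.coe_le_coe_iff.2 hc.le).trans hr.le
  obtain ⟨c, hc0, hc⟩ := (eventually_mem_nhdsWithin.and hev).exists
  exact ⟨c, hc0, fun v hv hv0 hvN => hc v ⟨hv, hv0, hvN⟩⟩

lemma exists_long_sparse_word [Finite A] (hlen : ∀ n, ∃ w ∈ W, w.length = n) (hSET : SET W)
    (hpos : ∀ v ∈ W, v ≠ [] → 0 < nu W v) (hPQ : ¬PQ W) {ε : ℝ} (hε : 0 < ε) (N : ℕ) :
    ∃ v ∈ W, N < v.length ∧ ∀ᶠ u in wordsFilter W, packingDensity v u < ε := by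
  obtain ⟨c, hc0, hc⟩ := exists_pos_le_nu_of_length_le hpos N
  simp only [PQ, not_exists, not_and, not_forall, not_le] at hPQ
  obtain ⟨v, hv, hv0, hνv⟩ := hPQ (min ε c) (lt_min hε hc0)
  refine ⟨v, hv, lt_of_not_ge fun hvN => ?_, ?_⟩
  · exact (hνv.trans_le (EReal.coe_le_coe_iff.2 (min_le_right ε c))).not_ge (hc v hv hv0 hvN)
  · obtain ⟨r, hr, hlim⟩ := hSET.tendsto_packingDensity hlen hv0
    rw [hr] at hνv
    exact hlim.eventually_lt_const ((EReal.coe_lt_coe_iff.1 hνv).trans_le (min_le_left ε c))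

lemma exists_sparse_sequence [Finite A] (hlen : ∀ n, ∃ w ∈ W, w.length = n) (hSET : SET W)
    (hpos : ∀ v ∈ W, v ≠ [] → 0 < nu W v) (hPQ : ¬PQ W) {ε : ℕ → ℝ} (hε : ∀ k, 0 < ε k) :
    ∃ (V : ℕ → List A) (M : ℕ → ℕ), Monotone M ∧ ∀ k, V k ∈ W ∧ k < (V k).length ∧
      k ≤ M k ∧ M k < (V (k + 1)).length ∧
      ∀ u ∈ W, M k ≤ u.length → packingDensity (V k) u < ε k := by
  have step : ∀ k N, ∃ v ∈ W, N < v.length ∧ ∃ T ≥ N,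
      ∀ u ∈ W, T ≤ u.length → packingDensity v u < ε k := fun k N => by
    obtain ⟨v, hv, hvN, hsparse⟩ := exists_long_sparse_word hlen hSET hpos hPQ (hε k) N
    obtain ⟨T, hT⟩ := eventually_wordsFilter.1 hsparse
    exact ⟨v, hv, hvN, max T N, le_max_right _ _, fun u hu hTu => hT u hu (by omega)⟩
  choose v hvW hvN T hTN hT using step
  -- the `k`-th word is chosen longer than `b k`, and `b (k + 1)` exceeds the `k`-th threshold
  let b : ℕ → ℕ := fun k => Nat.rec 0 (fun k bk => T k bk + k + 1) k
  have hb : ∀ k, b (k + 1) = T k (b k) + k + 1 := fun k => rfl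
  have hbk : ∀ k, k ≤ b k := fun k => by cases k <;> grind
  refine ⟨fun k => v k (b k), fun k => T k (b k), monotone_nat_of_le_succ fun k => ?_,
    fun k => ⟨hvW _ _, (hbk k).trans_lt (hvN _ _), (hbk k).trans (hTN _ _), ?_, hT _ _⟩⟩
  · grind [hTN (k + 1) (b (k + 1))]
  · grind [hvN (k + 1) (b (k + 1))]

end SETImpliesPQ

section Coverage

variable {V : ℕ → List A}

noncomputable def coverage (V : ℕ → List A) (u : List A) : ℕ :=
  ∑ k ∈ Finset.range (u.length + 1), maxDisjoint (V k) u * (V k).length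

lemma coverage_eq_sum_range (hV : ∀ k, k < (V k).length) {u : List A} {N : ℕ}
    (hN : ∀ k, N ≤ k → u.length < (V k).length) :
    coverage V u = ∑ k ∈ Finset.range N, maxDisjoint (V k) u * (V k).length := by
  have hzero : ∀ k, u.length < (V k).length → maxDisjoint (V k) u * (V k).length = 0 :=
    fun k hk => by
      rw [maxDisjoint_eq_zero_of_length_lt
        (List.ne_nil_of_length_pos (Nat.zero_lt_of_lt (hV k))) hk, zero_mul]
  rw [coverage, Finset.sum_subset (Finset.range_subset_range.2 (Nat.le_add_left _ N)) fun k _ hk =>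
      hzero k (by grind),
    ← Finset.sum_subset (Finset.range_subset_range.2 (Nat.le_add_right N _)) fun k _ hk =>
      hzero k (hN k (by simpa using hk))]

lemma coverage_add_coverage_le (hV : ∀ k, k < (V k).length) (a b : List A) :
    coverage V a + coverage V b ≤ coverage V (a ++ b) := by
  have hN : ∀ u : List A, u <:+: a ++ b →
      ∀ k, (a ++ b).length + 1 ≤ k → u.length < (V k).length :=
    fun u hu k hk => by grind [hu.length_le, hV k]
  rw [coverage_eq_sum_range hV (hN a (List.prefix_append a b).isInfix),
    coverage_eq_sum_range hV (hN b (List.suffix_append a b).isInfix), coverage,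
    ← Finset.sum_add_distrib]
  refine Finset.sum_le_sum fun k _ => ?_
  rw [← add_mul]
  exact Nat.mul_le_mul_right _ (maxDisjoint_add_maxDisjoint_le
    (List.ne_nil_of_length_pos (Nat.zero_lt_of_lt (hV k))) a b)

lemma length_le_coverage_self (hV : ∀ k, k < (V k).length) (k : ℕ) :
    (V k).length ≤ coverage V (V k) := by
  refine le_trans ?_ (Finset.single_le_sum (fun _ _ => Nat.zero_le _)
    (Finset.mem_range.2 (Nat.lt_succ_of_lt (hV k))))
  exact Nat.le_mul_of_pos_left _ (one_le_maxDisjoint_of_infix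
    (List.ne_nil_of_length_pos (Nat.zero_lt_of_lt (hV k))) (List.infix_refl _))

/-- Only `V 0, …, V L` fit into a word of length `M L`, and each covers at most a
`2^(-k-2)`-fraction of it. -/
lemma two_mul_coverage_le {W : Set (List A)} {M : ℕ → ℕ} (hM : Monotone M)
    (hV : ∀ k, k < (V k).length) (hVM : ∀ k, M k < (V (k + 1)).length)
    (hsparse : ∀ k, ∀ u ∈ W, M k ≤ u.length → packingDensity (V k) u < (1 / 2) ^ k / 4)
    {L : ℕ} {u : List A} (hu : u ∈ W) (hL : u.length = M L) (hu0 : 0 < u.length) :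
    2 * (coverage V u : ℝ) ≤ u.length := by
  rw [coverage_eq_sum_range hV (N := L + 1) fun k hk => by
    obtain ⟨k, rfl⟩ := Nat.exists_eq_add_of_le' (by omega : 1 ≤ k)
    grind [hM (by omega : L ≤ k), hVM k]]
  have hterm : ∀ k ∈ Finset.range (L + 1), ((maxDisjoint (V k) u * (V k).length : ℕ) : ℝ)
      ≤ u.length / 4 * (1 / 2) ^ k := fun k hk => by
    have := hsparse k u hu (hL ▸ hM (Finset.mem_range_succ_iff.1 hk))
    rw [packingDensity, div_lt_iff₀ (Nat.cast_pos.2 hu0)] at this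
    linarith
  have := (Finset.sum_le_sum hterm).trans_eq (Finset.mul_sum ..).symm
  push_cast at this ⊢
  nlinarith [sum_geometric_two_le (L + 1)]

end Coverage

lemma not_tendsto_of_frequently {β : Type*} {l : Filter β} {f : β → ℝ} {a b : ℝ} (hab : a < b)
    (ha : ∃ᶠ x in l, f x ≤ a) (hb : ∃ᶠ x in l, b ≤ f x) (Λ : EReal) :
    ¬Tendsto (fun x => (f x : EReal)) l (𝓝 Λ) := fun hlim => by
  have hΛa := isClosed_Iic.mem_of_frequently_of_tendsto
    (ha.mono fun _ h => EReal.coe_le_coe_iff.2 h) hlim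
  have hΛb := isClosed_Ici.mem_of_frequently_of_tendsto
    (hb.mono fun _ h => EReal.coe_le_coe_iff.2 h) hlim
  exact hab.not_ge (EReal.coe_le_coe_iff.1 (le_trans hΛb hΛa))

theorem PQ_of_SET [Finite A] {W : Set (List A)} (hlen : ∀ n, ∃ w ∈ W, w.length = n)
    (hpos : ∀ v ∈ W, v ≠ [] → 0 < nu W v) (hSET : SET W) : PQ W := by
  by_contra hPQ
  obtain ⟨V, M, hM, hV⟩ := exists_sparse_sequence hlen hSET hpos hPQ
    (ε := fun k => (1 / 2) ^ k / 4) (fun k => by positivity)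
  choose hVW hVlen hkM hMV hsparse using hV
  set F : List A → ℝ := fun u => u.length - coverage V u
  have hF : IsSubadditive W F := fun a b _ _ _ => by
    have : (coverage V a + coverage V b : ℝ) ≤ coverage V (a ++ b) := by
      exact_mod_cast coverage_add_coverage_le hVlen a b
    simp only [F, List.length_append]
    push_cast
    linarith
  refine not_tendsto_of_frequently (by norm_num : (0 : ℝ) < 1 / 2) ?_ ?_ _ (hSET F hF)
  · refine frequently_wordsFilter.2 fun L => ⟨V L, hVW L, (hVlen L).le, ?_⟩
    exact div_nonpos_of_nonpos_of_nonneg (by simpa [F] using length_le_coverage_self hVlen L)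
      (Nat.cast_nonneg _)
  · refine frequently_wordsFilter.2 fun L => ?_
    obtain ⟨u, hu, hlenu⟩ := hlen (M (L + 1))
    have hLu : L + 1 ≤ u.length := hlenu ▸ hkM (L + 1)
    have := two_mul_coverage_le hM hVlen hMV hsparse hu hlenu (by omega)
    refine ⟨u, hu, by omega, ?_⟩
    rw [le_div_iff₀ (by norm_cast; omega)]
    simp only [F]
    linarith

theorem SET_iff_PQ_general
    {A : Type*} [Fintype A] [TopologicalSpace A] [DiscreteTopology A]
    (Ω : Set (ℤ → A)) (hΩ : IsSubshift Ω) (hne : Ω.Nonempty) (hmin : IsMinimal Ω) :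
    SET (words Ω) ↔ PQ (words Ω) :=
  ⟨PQ_of_SET (exists_mem_words_length_eq hne) fun _ hv hv0 => nu_pos hΩ hmin hv hv0,
    SET_of_PQ (words_isFactorClosed Ω) (exists_mem_words_length_eq hne)⟩

/-- For a minimal subshift, the uniform subadditive ergodic theorem (SET)
holds if and only if (PQ) holds. -/
theorem SET_iff_PQ
    {A : Type*} [Fintype A] [Nonempty A] [TopologicalSpace A] [DiscreteTopology A]
    (Ω : Set (ℤ → A)) (hΩ : IsSubshift Ω) (hne : Ω.Nonempty) (hmin : IsMinimal Ω) :
    SET (words Ω) ↔ PQ (words Ω) :=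
  SET_iff_PQ_general Ω hΩ hne hmin

end SubshiftErgodic
end

section
/- Let (Ω,T) be a minimal subshift over a finite alphabet A with associated set of words W, and for n ≥ 1 let m(n) = min{|x| : x is a return word of some v ∈ W with |v| = n}. Then the following are equivalent: (i) (Ω,T) is aperiodic, i.e. no ω ∈ Ω satisfies T^p ω = ω for some p ≥ 1; (ii) m(n) → ∞ as n → ∞. -/
/-! A return word `z` of `v` makes `zv` a word of length `|z| + |v|` with a period `≤ |z|`, while
conversely a point of period `p` yields return words of length `≤ p` for all its factors.
Hence `m(n)` stays bounded iff there are words of arbitrary length with a common period `p`;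
by compactness of the subshift these are windows of a single `p`-periodic point of `Ω`.
Return words of every length exist by pigeonhole on the windows of any point of `Ω`. -/

open Filter Topology

namespace SubshiftErgodic

variable {A : Type*}

variable {Ω : Set (ℤ → A)} {ω : ℤ → A} {u v w z : List A} {k : ℤ} {p : ℕ}

lemma shift_comp_shiftZ (n : ℤ) : shift ∘ shiftZ n = (shiftZ (n + 1) : (ℤ → A) → ℤ → A) := by
  funext ω k
  simp only [Function.comp_apply, shift, shiftZ, add_assoc, add_comm 1 n]

lemma shiftZ_comp_shift (n : ℤ) : shiftZ n ∘ shift = (shiftZ (n + 1) : (ℤ → A) → ℤ → A) := by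
  funext ω k
  simp only [Function.comp_apply, shift, shiftZ, add_assoc]

lemma image_shiftZ (h : shift '' Ω = Ω) (n : ℤ) : shiftZ n '' Ω = Ω := by
  induction n using Int.induction_on with
  | zero =>
    have : (shiftZ 0 : (ℤ → A) → ℤ → A) = id := by funext ω k; simp [shiftZ]
    rw [this, Set.image_id]
  | succ n ih => rw [← shift_comp_shiftZ, Set.image_comp, ih, h]
  | pred n ih =>
    conv_lhs => rw [← h, ← Set.image_comp, shiftZ_comp_shift, sub_add_cancel, ih]

lemma IsSubshift.shiftZ_mem [TopologicalSpace A] (hΩ : IsSubshift Ω) (n : ℤ) (hω : ω ∈ Ω) :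
    shiftZ n ω ∈ Ω :=
  image_shiftZ hΩ.2 n ▸ Set.mem_image_of_mem _ hω

lemma continuous_shiftZ [TopologicalSpace A] (n : ℤ) :
    Continuous (shiftZ n : (ℤ → A) → ℤ → A) :=
  continuous_pi fun k => continuous_apply (k + n)

lemma occursAt_shiftZ {n : ℤ} : OccursAt u (shiftZ n ω) k ↔ OccursAt u ω (k + n) := by
  simp only [OccursAt, shiftZ, add_right_comm]

lemma OccursAt.occursAt_of_occursIn {i : ℕ} (hw : OccursAt w ω k) (hv : OccursIn v w i) :
    OccursAt v ω (k + i) := by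
  intro t
  have hlt : i + t < w.length := by have := hv.1; omega
  rw [add_assoc, ← Nat.cast_add, List.get_eq_getElem, hv.2.getElem t.isLt, List.getElem_drop]
  exact hw ⟨i + t, hlt⟩

lemma eqOn_shiftZ_of_occursAt (h₀ : OccursAt u ω k) (h₁ : OccursAt u ω (k + p)) :
    Set.EqOn (shiftZ p ω) ω (Set.Ico k (k + u.length)) := by
  intro i hi
  obtain ⟨t, rfl⟩ : ∃ t : ℕ, i = k + t := ⟨(i - k).toNat, by have := hi.1; omega⟩
  have ht : t < u.length := by have := hi.2; omega
  rw [shiftZ, add_right_comm, h₁ ⟨t, ht⟩, h₀ ⟨t, ht⟩]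

def window (ω : ℤ → A) (k : ℤ) (L : ℕ) : List A :=
  List.ofFn fun i : Fin L => ω (k + i)

@[simp] lemma length_window (L : ℕ) : (window ω k L).length = L := List.length_ofFn

@[simp] lemma getElem_window {L i : ℕ} (h : i < (window ω k L).length) :
    (window ω k L)[i] = ω (k + i) := List.getElem_ofFn h

lemma occursAt_window (L : ℕ) : OccursAt (window ω k L) ω k := fun i => by simp

lemma window_mem_words (hω : ω ∈ Ω) (k : ℤ) (L : ℕ) : window ω k L ∈ words Ω :=
  ⟨ω, hω, k, occursAt_window L⟩

lemma OccursAt.window_eq (h : OccursAt u ω k) : window ω k u.length = u :=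
  List.ext_getElem (length_window _) fun i _ hi => by simpa using h ⟨i, hi⟩

lemma window_append (k : ℤ) (a b : ℕ) :
    window ω k a ++ window ω (k + a) b = window ω k (a + b) := by
  refine List.ext_getElem (by simp) fun i h _ => ?_
  rcases lt_or_ge i a with hi | hi
  · rw [List.getElem_append_left (by simpa using hi)]
    simp
  · rw [List.getElem_append_right (by simpa using hi)]
    simp only [getElem_window, length_window]
    congr 1
    push_cast [hi]
    ring

lemma occursIn_window_iff {L i : ℕ} :
    OccursIn u (window ω k L) i ↔ i + u.length ≤ L ∧ OccursAt u ω (k + i) := by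
  rw [OccursIn, length_window, and_congr_right_iff]
  intro hi
  rw [List.prefix_iff_getElem]
  simp only [List.length_drop, length_window, List.getElem_drop, getElem_window, OccursAt,
    Fin.forall_iff, List.get_eq_getElem, Nat.cast_add, add_assoc]
  exact ⟨fun ⟨_, h⟩ t ht => (h t ht).symm, fun h => ⟨by omega, fun t ht => (h t ht).symm⟩⟩

lemma exists_isReturnWord_length_le (hω : ω ∈ Ω) (h₀ : OccursAt u ω k) (hp : 0 < p)
    (h₁ : OccursAt u ω (k + p)) : ∃ z, IsReturnWord (words Ω) z u ∧ z.length ≤ p := by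
  classical
  have hex : ∃ q : ℕ, 0 < q ∧ OccursAt u ω (k + q) := ⟨p, hp, h₁⟩
  obtain ⟨hq, hqu⟩ := Nat.find_spec hex
  set q := Nat.find hex
  have hzu : window ω k q ++ u = window ω k (q + u.length) := by
    rw [← window_append, hqu.window_eq]
  have hocc : {i | OccursIn u (window ω k q ++ u) i} = {0, q} := by
    ext i
    rw [hzu, Set.mem_ofPred_eq, occursIn_window_iff, Set.mem_insert_iff, Set.mem_singleton_iff]
    constructor
    · rintro ⟨hi, hiu⟩
      rcases Nat.eq_zero_or_pos i with rfl | hi₀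
      · exact .inl rfl
      · exact .inr (le_antisymm (by omega) (Nat.find_min' hex ⟨hi₀, hiu⟩))
    · rintro (rfl | rfl)
      · exact ⟨by omega, by simpa using h₀⟩
      · exact ⟨le_rfl, hqu⟩
  have hprefix : OccursIn u (window ω k q ++ u) 0 := (Set.ext_iff.1 hocc 0).2 (Set.mem_insert 0 {q})
  refine ⟨window ω k q, ⟨window_mem_words hω _ _, hzu ▸ window_mem_words hω _ _, ?_, ?_⟩, ?_⟩
  · rw [occ, hocc, Set.ncard_pair hq.ne]
  · simpa using hprefix.2
  · exact (length_window q).trans_le (Nat.find_min' hex ⟨hp, h₁⟩)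

lemma exists_isReturnWord_of_length [Finite A] (hω : ω ∈ Ω) (n : ℕ) :
    ∃ v z, v ∈ words Ω ∧ v.length = n ∧ IsReturnWord (words Ω) z v := by
  obtain ⟨i, j, hij, heq⟩ :=
    Finite.exists_ne_map_eq_of_infinite fun i : ℕ => fun t : Fin n => ω (i + t)
  wlog hlt : i < j generalizing i j
  · exact this j i hij.symm heq.symm (by omega)
  have hj : OccursAt (window ω i n) ω ((i : ℤ) + (j - i : ℕ)) := by
    rw [show ((i : ℤ) + (j - i : ℕ)) = j by omega]
    rintro ⟨t, ht⟩
    rw [length_window] at ht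
    simpa using (congrFun heq ⟨t, ht⟩).symm
  obtain ⟨z, hz, -⟩ := exists_isReturnWord_length_le hω (occursAt_window n) (by omega) hj
  exact ⟨window ω i n, z, window_mem_words hω _ _, length_window n, hz⟩

lemma exists_isReturnWord_length_eq_mRet [Finite A] (hne : Ω.Nonempty) (n : ℕ) :
    ∃ v z, v ∈ words Ω ∧ v.length = n ∧ IsReturnWord (words Ω) z v ∧
      z.length = mRet (words Ω) n := by
  obtain ⟨v, z, hv, hvn, hz⟩ := exists_isReturnWord_of_length hne.some_mem n
  have hlengths : {k | ∃ v z : List A, v ∈ words Ω ∧ v.length = n ∧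
      IsReturnWord (words Ω) z v ∧ z.length = k}.Nonempty := ⟨z.length, v, z, hv, hvn, hz, rfl⟩
  exact Nat.sInf_mem hlengths

lemma mRet_le_of_shiftZ_eq (hω : ω ∈ Ω) (hp : 0 < p) (hper : shiftZ p ω = ω) (n : ℕ) :
    mRet (words Ω) n ≤ p := by
  have h₀ : OccursAt (window ω 0 n) ω 0 := occursAt_window n
  have h₁ : OccursAt (window ω 0 n) ω (0 + p) := by rwa [← occursAt_shiftZ, hper]
  obtain ⟨z, hz, hzp⟩ := exists_isReturnWord_length_le hω h₀ hp h₁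
  have hmRet : mRet (words Ω) n ≤ z.length :=
    Nat.sInf_le ⟨window ω 0 n, z, window_mem_words hω 0 n, length_window n, hz, rfl⟩
  exact hmRet.trans hzp

lemma IsReturnWord.exists_eqOn_shiftZ (h : IsReturnWord (words Ω) z v) :
    ∃ ω ∈ Ω, ∃ k : ℤ, ∃ p : ℕ, 0 < p ∧ p ≤ z.length ∧
      Set.EqOn (shiftZ p ω) ω (Set.Ico k (k + v.length)) := by
  obtain ⟨-, ⟨ω, hω, k, hk⟩, hocc, hprefix⟩ := h
  obtain ⟨x, y, hxy, hxy_eq⟩ := Set.ncard_eq_two.1 hocc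
  obtain ⟨p, hp, hp₀⟩ : ∃ p ∈ ({x, y} : Set ℕ), p ≠ 0 := by
    rcases eq_or_ne x 0 with rfl | hx
    · exact ⟨y, by simp, hxy.symm⟩
    · exact ⟨x, by simp, hx⟩
  rw [← hxy_eq] at hp
  have hv₀ : OccursIn v (z ++ v) 0 := ⟨by simp, by simpa using hprefix⟩
  have hpz : p ≤ z.length := by have := hp.1; rw [List.length_append] at this; omega
  refine ⟨ω, hω, k, p, Nat.pos_of_ne_zero hp₀, hpz, ?_⟩
  have h₀ := hk.occursAt_of_occursIn hv₀
  rw [Nat.cast_zero, add_zero] at h₀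
  exact eqOn_shiftZ_of_occursAt h₀ (hk.occursAt_of_occursIn hp)

lemma exists_shiftZ_eq_of_eqOn [Finite A] [TopologicalSpace A] [DiscreteTopology A]
    (hΩ : IsSubshift Ω)
    (h : ∀ N : ℕ, ∃ ω ∈ Ω, ∃ k : ℤ, Set.EqOn (shiftZ p ω) ω (Set.Ico k (k + N))) :
    ∃ ω ∈ Ω, shiftZ p ω = ω := by
  let K : ℕ → Set (ℤ → A) := fun N => Ω ∩ {ω | Set.EqOn (shiftZ p ω) ω (Set.Icc (-N) N)}
  have hK_closed (N : ℕ) : IsClosed (K N) := by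
    refine hΩ.1.inter ?_
    simp only [Set.EqOn, Set.ofPred_forall]
    exact isClosed_biInter fun i _ =>
      isClosed_eq ((continuous_apply i).comp (continuous_shiftZ p)) (continuous_apply i)
  -- recentre a window of length `2N + 1` at the origin
  have hK_nonempty (N : ℕ) : (K N).Nonempty := by
    obtain ⟨ω, hω, k, hper⟩ := h (2 * N + 1)
    refine ⟨shiftZ (k + N) ω, hΩ.shiftZ_mem _ hω, fun i hi => ?_⟩
    have := hper (show i + (k + N) ∈ Set.Ico k (k + (2 * N + 1 : ℕ)) from
      ⟨by linarith [hi.1], by push_cast; linarith [hi.2]⟩)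
    simpa only [shiftZ, add_right_comm i] using this
  have hK_anti (N : ℕ) : K (N + 1) ⊆ K N := fun ω hω =>
    ⟨hω.1, hω.2.mono (Set.Icc_subset_Icc (by push_cast; omega) (by push_cast; omega))⟩
  have : CompactSpace A := Finite.compactSpace
  obtain ⟨ω, hω⟩ := IsCompact.nonempty_iInter_of_sequence_nonempty_isCompact_isClosed K hK_anti
    hK_nonempty (hK_closed 0).isCompact hK_closed
  rw [Set.mem_iInter] at hω
  refine ⟨ω, (hω 0).1, funext fun i => (hω i.natAbs).2 ⟨?_, ?_⟩⟩ <;> omega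

lemma eventually_not_eqOn_shiftZ [Finite A] [TopologicalSpace A] [DiscreteTopology A]
    (hΩ : IsSubshift Ω) (hap : Aperiodic Ω) (hp : 0 < p) :
    ∀ᶠ N : ℕ in atTop, ∀ ω ∈ Ω, ∀ k : ℤ, ¬ Set.EqOn (shiftZ p ω) ω (Set.Ico k (k + N)) := by
  have : ¬ ∀ N : ℕ, ∃ ω ∈ Ω, ∃ k : ℤ, Set.EqOn (shiftZ p ω) ω (Set.Ico k (k + N)) := fun h => by
    obtain ⟨ω, hω, hper⟩ := exists_shiftZ_eq_of_eqOn hΩ h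
    exact hap ω hω p hp hper
  push Not at this
  obtain ⟨N, hN⟩ := this
  filter_upwards [eventually_ge_atTop N] with n hn ω hω k hper
  exact hN ω hω k (hper.mono (Set.Ico_subset_Ico_right (by omega)))

lemma tendsto_mRet_of_aperiodic [Finite A] [TopologicalSpace A] [DiscreteTopology A]
    (hΩ : IsSubshift Ω) (hne : Ω.Nonempty) (hap : Aperiodic Ω) :
    Tendsto (mRet (words Ω)) atTop atTop := by
  refine tendsto_atTop.2 fun B => ?_
  filter_upwards [(eventually_all_finset (Finset.Ioo 0 B)).2 fun p hp =>
    eventually_not_eqOn_shiftZ hΩ hap (Finset.mem_Ioo.1 hp).1] with n hn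
  by_contra! hlt
  obtain ⟨v, z, -, rfl, hz, hzn⟩ := exists_isReturnWord_length_eq_mRet hne n
  obtain ⟨ω, hω, k, p, hp, hpz, hper⟩ := hz.exists_eqOn_shiftZ
  exact hn p (Finset.mem_Ioo.2 ⟨hp, by omega⟩) ω hω k hper

lemma aperiodic_of_tendsto_mRet (h : Tendsto (mRet (words Ω)) atTop atTop) : Aperiodic Ω :=
  fun ω hω p hp hper => by
    obtain ⟨n, hn⟩ := (h.eventually_ge_atTop (p + 1)).exists
    exact absurd (mRet_le_of_shiftZ_eq hω hp hper n) (by omega)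

theorem aperiodic_iff_return_lengths_tendsto_atTop_general
    {A : Type*} [Fintype A] [TopologicalSpace A] [DiscreteTopology A]
    (Ω : Set (ℤ → A)) (hΩ : IsSubshift Ω) (hne : Ω.Nonempty) :
    Aperiodic Ω ↔ Filter.Tendsto (mRet (words Ω)) Filter.atTop Filter.atTop :=
  ⟨tendsto_mRet_of_aperiodic hΩ hne, aperiodic_of_tendsto_mRet⟩

/-- A minimal subshift is aperiodic iff the minimal length `m(n)` of return
words of words of length `n` tends to infinity. -/
theorem aperiodic_iff_return_lengths_tendsto_atTop
    {A : Type*} [Fintype A] [Nonempty A] [TopologicalSpace A] [DiscreteTopology A]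
    (Ω : Set (ℤ → A)) (hΩ : IsSubshift Ω) (hne : Ω.Nonempty) (hmin : IsMinimal Ω) :
    Aperiodic Ω ↔ Filter.Tendsto (mRet (words Ω)) Filter.atTop Filter.atTop :=
  aperiodic_iff_return_lengths_tendsto_atTop_general Ω hΩ hne

end SubshiftErgodic
end

section
/- Let (Ω,T) be a minimal subshift over a finite alphabet A with associated set of words W. Let u ∈ W be nonempty, let z be a return word of u, and let w ∈ W. Then the number of indices i such that u occurs in w at position i, u occurs in w at position i + |z|, and the factor of w of length |z| starting at position i equals z (equivalently, the number of occurrences of z as a block u_j ≠ u_l in the u-partition w = a u_1 ⋯ u_l b of w) equals ♯_{zu}(w), the number of occurrences of the concatenation zu as a factor of w. -/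
open Filter Topology

namespace SubshiftErgodic

variable {A : Type*}

/-- the number of occurrences of a return word `z` of `u` as a block of the
`u`-partition of `w` equals the number of occurrences of the word `zu` in `w`. -/
theorem returnWord_occurrences_eq_occ
    {A : Type*} [Fintype A] [Nonempty A] [TopologicalSpace A] [DiscreteTopology A]
    (Ω : Set (ℤ → A)) (hΩ : IsSubshift Ω) (hne : Ω.Nonempty) (hmin : IsMinimal Ω)
    (u z w : List A) (hu : u ∈ words Ω) (hune : u ≠ [])
    (hz : IsReturnWord (words Ω) z u) (hw : w ∈ words Ω) :
    {i : ℕ | OccursIn u w i ∧ OccursIn u w (i + z.length) ∧ OccursIn z w i}.ncard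
      = occ (z ++ u) w := by
  have hpre : u <+: z ++ u := hz.2.2.2
  unfold occ
  congr 1
  ext i
  simp only [Set.mem_setOf_eq, OccursIn, List.length_append]
  constructor
  · rintro ⟨⟨h1, h2⟩, ⟨h3, h4⟩, ⟨h5, h6⟩⟩
    refine ⟨by omega, ?_⟩
    obtain ⟨t', ht'⟩ := h6
    have hdd : List.drop (i + z.length) w = t' := by
      rw [← List.drop_drop, ← ht', List.drop_left]
    rw [hdd] at h4
    obtain ⟨s, hs⟩ := h4
    exact ⟨s, by rw [List.append_assoc, hs, ht']⟩
  · rintro ⟨h1, h2⟩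
    obtain ⟨s, hs⟩ := h2
    have hulen : u.length ≤ z.length + u.length := by omega
    have hz' : z <+: List.drop i w := (List.prefix_append z u).trans ⟨s, hs⟩
    have hu' : u <+: List.drop i w := hpre.trans ⟨s, hs⟩
    have hdd : List.drop (i + z.length) w = u ++ s := by
      rw [← List.drop_drop, ← hs, List.append_assoc, List.drop_left]
    exact ⟨⟨by omega, hu'⟩, ⟨by omega, ⟨s, hdd.symm⟩⟩, ⟨by omega, hz'⟩⟩

end SubshiftErgodic
end
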